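/- arXiv:2111.15105 — 3 statements merged into one kernel-verified Lean document; each statement's English description precedes it below -/
import Mathlib

section
/- For nonnegative integers k_1, ..., k_z and m with m ∉ {1,2,3}, if k_1 + ... + k_z + m = x and x > 3, then C(k_1+1,2) + ... + C(k_z+1,2) + (m^2 - m) ≤ x^2 - x. If instead x ≤ 3, the same sum is at most C(x+1,2). -/
/-!
The map `n ↦ C(n + 1, 2)` is superadditive, so the type `A` terms contribute at most
`C(S + 1, 2)` with `S = ∑ kᵢ`. What remains is the elementary inequality
`C(S + 1, 2) + (m² - m) ≤ (S + m)² - (S + m)`, valid for `m ≥ 1`, and for `m = 0` once `S ≥ 3`.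
-/

theorem Nat.choose_two_succ_add_choose_two_succ_le (a b : ℕ) :
    (a + 1).choose 2 + (b + 1).choose 2 ≤ (a + b + 1).choose 2 := by
  qify
  simp only [Nat.cast_choose_two]
  push_cast
  nlinarith [mul_nonneg a.cast_nonneg (α := ℚ) b.cast_nonneg]

theorem Nat.choose_two_succ_le_sq_sub {n : ℕ} (hn : 3 ≤ n) : (n + 1).choose 2 ≤ n ^ 2 - n := by
  have := Nat.le_self_pow two_ne_zero n
  qify [this] at hn ⊢
  rw [Nat.cast_choose_two]
  push_cast
  nlinarith

theorem Nat.choose_two_succ_add_sq_sub_le (n : ℕ) {m : ℕ} (hm : 1 ≤ m) :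
    (n + 1).choose 2 + (m ^ 2 - m) ≤ (n + m) ^ 2 - (n + m) := by
  have h₁ := Nat.le_self_pow two_ne_zero m
  have h₂ := Nat.le_self_pow two_ne_zero (n + m)
  qify [h₁, h₂] at hm ⊢
  rw [Nat.cast_choose_two]
  push_cast
  nlinarith [mul_nonneg n.cast_nonneg (α := ℚ) (sub_nonneg.2 hm)]

theorem Finset.sum_choose_two_succ_le {ι : Type*} (s : Finset ι) (k : ι → ℕ) :
    ∑ i ∈ s, (k i + 1).choose 2 ≤ (∑ i ∈ s, k i + 1).choose 2 := by
  induction s using Finset.cons_induction with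
  | empty => simp
  | cons a s ha ih =>
    rw [sum_cons, sum_cons]
    calc (k a + 1).choose 2 + ∑ i ∈ s, (k i + 1).choose 2
        ≤ (k a + 1).choose 2 + (∑ i ∈ s, k i + 1).choose 2 := by gcongr
      _ ≤ (k a + ∑ i ∈ s, k i + 1).choose 2 := Nat.choose_two_succ_add_choose_two_succ_le _ _

/-- For nonnegative integers `k 1, ..., k z` and `m ∉ {1,2,3}` with `∑ i, k i + m = x`:
if `x > 3` then `∑ i, C(k i + 1, 2) + (m² - m) ≤ x² - x`, and if `x ≤ 3` then
`∑ i, C(k i + 1, 2) + (m² - m) ≤ C(x + 1, 2)`. -/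
theorem stmt_4 (z : ℕ) (k : Fin z → ℕ) (m x : ℕ)
    (hm : m ≠ 1 ∧ m ≠ 2 ∧ m ≠ 3)
    (hsum : (∑ i, k i) + m = x) :
    (x > 3 → (∑ i, (k i + 1).choose 2) + (m ^ 2 - m) ≤ x ^ 2 - x) ∧
    (x ≤ 3 → (∑ i, (k i + 1).choose 2) + (m ^ 2 - m) ≤ (x + 1).choose 2) := by
  subst hsum
  have hk := Finset.univ.sum_choose_two_succ_le k
  refine ⟨fun hx => ?_, fun hx => ?_⟩
  · rcases Nat.eq_zero_or_pos m with rfl | hm₀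
    · simpa using hk.trans (Nat.choose_two_succ_le_sq_sub (by omega))
    · exact (Nat.add_le_add_right hk _).trans (Nat.choose_two_succ_add_sq_sub_le _ hm₀)
  · obtain rfl : m = 0 := by omega
    simpa using hk
end

section
/- In the dihedral Coxeter group I_2(n) = ⟨s_1, s_2 | s_1² = s_2² = (s_1 s_2)^n = e⟩ with n ≥ 2, the number of left descents d(w) equals 2 if w is the longest element w_0, equals 0 if w = e, and equals 1 otherwise. Consequently the number of proper elements of I_2(n) (elements w with ℓ(w) ≤ 2 + maxw_0(d(w)), where maxw_0(2) = n, maxw_0(1) = 1, maxw_0(0) = 0) is bounded by a constant independent of n, namely at most 8, so the proportion of proper elements tends to 0 as n → ∞. -/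
/-!
If `j` is a right descent of `w` in a rank-two Coxeter system, then `w` is the product of the
alternating word of length `ℓ w` ending in `j`: by induction on `ℓ w`, the right descent of `w sⱼ`
cannot be `j` again. So an element with both generators as right (equivalently, left) descents is
the product of both alternating words of length `ℓ w`, which forces `(s₀ s₁) ^ ℓ w = 1`. Mapping
`s₀, s₁` to two adjacent reflections of the regular `(m + 2)`-gon shows that `s₀ s₁` has order
`m + 2`, and an alternating word longer than `m + 2` is not reduced, so `ℓ w = m + 2`; conversely
at maximal length every generator is a descent. Proper elements therefore have length at most `3`
or are `w₀`: at most `1 + 6 + 1` of them, while `|W| ≥ orderOf (s₀ s₁) = m + 2`.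
-/

open Filter
open scoped Classical

namespace CoxeterMatrix

theorem I_apply_of_ne {m : ℕ} {i j : Fin 2} (h : i ≠ j) :
    CoxeterMatrix.I m i j = m + 2 := by
  simp [CoxeterMatrix.I, h]

theorem isLiftable_I_sr (m : ℕ) :
    (CoxeterMatrix.I m).IsLiftable fun i : Fin 2 => DihedralGroup.sr (i.val : ZMod (m + 2)) := by
  intro i j
  rw [DihedralGroup.sr_mul_sr, DihedralGroup.r_pow]
  rcases eq_or_ne i j with rfl | hij
  · rw [sub_self, zero_mul, DihedralGroup.r_zero]
  · rw [I_apply_of_ne hij, ZMod.natCast_self, mul_zero, DihedralGroup.r_zero]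

end CoxeterMatrix

namespace CoxeterSystem

variable {W : Type*} [Group W]

section General

variable {B : Type*} {M : CoxeterMatrix B} (cs : CoxeterSystem M W)

theorem simple_mul_simple_pow_eq_one_of_wordProd_alternatingWord_eq {i j : B} {k : ℕ}
    (h : cs.wordProd (alternatingWord i j k) = cs.wordProd (alternatingWord j i k)) :
    (cs.simple i * cs.simple j) ^ k = 1 := by
  set t := cs.simple i * cs.simple j
  have hji : cs.simple j * cs.simple i = t⁻¹ := by
    rw [mul_inv_rev, inv_simple, inv_simple]
  rw [prod_alternatingWord_eq_mul_pow, prod_alternatingWord_eq_mul_pow, hji, inv_pow] at h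
  obtain ⟨p, rfl | rfl⟩ := Nat.even_or_odd' k
  · simp only [even_two_mul, if_true, one_mul, Nat.mul_div_cancel_left p two_pos] at h
    rw [two_mul, pow_add, mul_eq_one_iff_eq_inv]
    exact h
  · have hp : (2 * p + 1) / 2 = p := by omega
    simp only [Nat.not_even_two_mul_add_one, if_false, hp] at h
    have htp : t ^ (p + 1) = (t ^ p)⁻¹ := by
      rw [pow_succ', mul_assoc, h, ← mul_assoc, simple_mul_simple_self, one_mul]
    rw [two_mul, add_assoc, pow_add, htp, mul_inv_cancel]

end General

section RankTwo

variable {M : CoxeterMatrix (Fin 2)} (cs : CoxeterSystem M W)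

theorem eq_wordProd_alternatingWord_of_isRightDescent {w : W} {j : Fin 2}
    (h : cs.IsRightDescent w j) : w = cs.wordProd (alternatingWord (1 - j) j (cs.length w)) := by
  induction hn : cs.length w generalizing w j with
  | zero => simp [IsRightDescent, hn] at h
  | succ n ih =>
    have hu : cs.length (w * cs.simple j) = n := by rw [isRightDescent_iff] at h; omega
    have hw : w = w * cs.simple j * cs.simple j := (cs.simple_mul_simple_cancel_right j).symm
    rcases eq_or_ne (w * cs.simple j) 1 with h1 | h1
    · obtain rfl : n = 0 := by rw [← hu, h1, length_one]
      rw [hw, h1, one_mul]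
      simp [alternatingWord]
    · obtain ⟨i, hi⟩ := cs.exists_rightDescent_of_ne_one h1
      have hij : i = 1 - j := by
        by_contra hne
        obtain rfl : i = j := by omega
        rw [IsRightDescent, simple_mul_simple_cancel_right] at hi
        omega
      rw [hw, ih hi hu, hij, sub_sub_cancel, alternatingWord_succ, wordProd_concat]

end RankTwo

section Dihedral

variable {m : ℕ} (cs : CoxeterSystem (CoxeterMatrix.I m) W)

noncomputable def toDihedralGroup : W →* DihedralGroup (m + 2) :=
  cs.lift ⟨_, CoxeterMatrix.isLiftable_I_sr m⟩

theorem orderOf_simple_zero_mul_simple_one : orderOf (cs.simple 0 * cs.simple 1) = m + 2 := by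
  have himage : cs.toDihedralGroup (cs.simple 0 * cs.simple 1) = DihedralGroup.r 1 := by
    simp [toDihedralGroup, lift_apply_simple, DihedralGroup.sr_mul_sr]
  apply Nat.dvd_antisymm
  · apply orderOf_dvd_of_pow_eq_one
    simpa [CoxeterMatrix.I_apply_of_ne] using cs.simple_mul_simple_pow 0 1
  · have := orderOf_map_dvd cs.toDihedralGroup (cs.simple 0 * cs.simple 1)
    rwa [himage, DihedralGroup.orderOf_r_one] at this

theorem length_le (w : W) : cs.length w ≤ m + 2 := by
  rcases eq_or_ne w 1 with rfl | hw
  · simp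
  obtain ⟨j, hj⟩ := cs.exists_rightDescent_of_ne_one hw
  have hM : CoxeterMatrix.I m (1 - j) j = m + 2 := CoxeterMatrix.I_apply_of_ne (by omega)
  by_contra! hlt
  refine cs.not_isReduced_alternatingWord (1 - j) j (by omega) (by omega : cs.length w > _) ?_
  rw [IsReduced, ← cs.eq_wordProd_alternatingWord_of_isRightDescent hj, length_alternatingWord]

theorem isLeftDescent_of_length_eq {w : W} (hw : cs.length w = m + 2) (i : Fin 2) :
    cs.IsLeftDescent w i :=
  lt_of_le_of_ne (hw ▸ cs.length_le _) (cs.length_simple_mul_ne w i)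

theorem isRightDescent_of_length_eq {w : W} (hw : cs.length w = m + 2) (i : Fin 2) :
    cs.IsRightDescent w i := by
  rw [← isLeftDescent_inv_iff]
  exact cs.isLeftDescent_of_length_eq (by rwa [length_inv]) i

theorem length_eq_of_isRightDescent {w : W} (h0 : cs.IsRightDescent w 0)
    (h1 : cs.IsRightDescent w 1) : cs.length w = m + 2 := by
  have hpow : (cs.simple 0 * cs.simple 1) ^ cs.length w = 1 := by
    apply cs.simple_mul_simple_pow_eq_one_of_wordProd_alternatingWord_eq
    have e0 := cs.eq_wordProd_alternatingWord_of_isRightDescent h0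
    have e1 := cs.eq_wordProd_alternatingWord_of_isRightDescent h1
    simp only [sub_zero, sub_self] at e0 e1
    rw [← e0, ← e1]
  have hdvd : m + 2 ∣ cs.length w :=
    cs.orderOf_simple_zero_mul_simple_one ▸ orderOf_dvd_of_pow_eq_one hpow
  have hpos : 0 < cs.length w := by rw [IsRightDescent] at h0; omega
  exact le_antisymm (cs.length_le w) (Nat.le_of_dvd hpos hdvd)

theorem length_eq_of_isLeftDescent {w : W} (h0 : cs.IsLeftDescent w 0)
    (h1 : cs.IsLeftDescent w 1) : cs.length w = m + 2 := by
  rw [← isRightDescent_inv_iff] at h0 h1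
  rw [← length_inv]
  exact cs.length_eq_of_isRightDescent h0 h1

theorem card_isLeftDescent (w : W) :
    Nat.card {i : Fin 2 // cs.IsLeftDescent w i} =
      if cs.length w = m + 2 then 2 else if w = 1 then 0 else 1 := by
  have hmax : cs.length w = m + 2 ↔ cs.IsLeftDescent w 0 ∧ cs.IsLeftDescent w 1 :=
    ⟨fun h => ⟨cs.isLeftDescent_of_length_eq h 0, cs.isLeftDescent_of_length_eq h 1⟩,
      fun h => cs.length_eq_of_isLeftDescent h.1 h.2⟩
  have hone : w = 1 ↔ ¬cs.IsLeftDescent w 0 ∧ ¬cs.IsLeftDescent w 1 := by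
    refine ⟨fun h => h ▸ ⟨cs.not_isLeftDescent_one 0, cs.not_isLeftDescent_one 1⟩, fun h => ?_⟩
    by_contra hw
    obtain ⟨i, hi⟩ := cs.exists_leftDescent_of_ne_one hw
    fin_cases i <;> tauto
  rw [Nat.card_eq_fintype_card, Fintype.card_subtype, Finset.card_filter, Fin.sum_univ_two]
  split_ifs <;> tauto

theorem card_setOf_length_le_three_or_eq_le :
    Nat.card {w : W | cs.length w ≤ 3 ∨ cs.length w = m + 2} ≤ 8 := by
  let T : Finset W := insert 1 <| insert (cs.wordProd (alternatingWord 1 0 (m + 2))) <|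
    ((Finset.univ : Finset (Fin 2)) ×ˢ Finset.Icc 1 3).image fun p =>
      cs.wordProd (alternatingWord (1 - p.1) p.1 p.2)
  have hsub : {w : W | cs.length w ≤ 3 ∨ cs.length w = m + 2} ⊆ T := by
    intro w hw
    rcases eq_or_ne w 1 with rfl | hw1
    · simp [T]
    obtain ⟨j, hj⟩ := cs.exists_rightDescent_of_ne_one hw1
    have hpos : 0 < cs.length w := by rw [IsRightDescent] at hj; omega
    rcases hw with hle | hmax
    · refine Finset.mem_insert_of_mem (Finset.mem_insert_of_mem (Finset.mem_image.mpr
        ⟨(j, cs.length w),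
          Finset.mem_product.mpr ⟨Finset.mem_univ _, Finset.mem_Icc.mpr ⟨hpos, hle⟩⟩, ?_⟩))
      exact (cs.eq_wordProd_alternatingWord_of_isRightDescent hj).symm
    · have h := cs.eq_wordProd_alternatingWord_of_isRightDescent
        (cs.isRightDescent_of_length_eq hmax 0)
      rw [hmax, sub_zero] at h
      simp [T, ← h]
  calc Nat.card {w : W | cs.length w ≤ 3 ∨ cs.length w = m + 2}
      ≤ T.card := by
        rw [← Set.ncard_coe_finset T, Nat.card_coe_set_eq]
        exact Set.ncard_le_ncard hsub T.finite_toSet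
    _ ≤ 8 := by
        grw [Finset.card_insert_le, Finset.card_insert_le, Finset.card_image_le]
        simp

end Dihedral

end CoxeterSystem

/-- In the dihedral Coxeter group `I₂(n)` (`n = m + 2 ≥ 2`; `CoxeterMatrix.I₂ₘ m` is the
Coxeter matrix of the symmetry group of the regular `(m+2)`-gon): the number of left
descents `d w` is `2` if `w = w₀` (the longest element, characterized by `ℓ w = n`),
`0` if `w = e`, and `1` otherwise; the number of proper elements (those with
`ℓ w ≤ 2 + maxw₀ (d w)`, where `maxw₀ 2 = n`, `maxw₀ 1 = 1`, `maxw₀ 0 = 0`) is at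
most `8`; and hence the proportion of proper elements tends to `0` as `n → ∞`. -/
theorem stmt_15 (W : ℕ → Type*) [∀ m, Group (W m)] [∀ m, Fintype (W m)]
    (cs : ∀ m : ℕ, CoxeterSystem (CoxeterMatrix.I m) (W m))
    (d : ∀ m : ℕ, W m → ℕ)
    (hd : ∀ m w, d m w = Nat.card {i : Fin 2 // (cs m).IsLeftDescent w i})
    (maxw₀ : ℕ → ℕ → ℕ)
    (hmaxw₀ : ∀ m x, maxw₀ m x = if x = 2 then m + 2 else if x = 1 then 1 else 0) :
    (∀ m : ℕ, ∀ w : W m,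
      d m w = if (cs m).length w = m + 2 then 2 else if w = 1 then 0 else 1) ∧
    (∀ m : ℕ,
      Nat.card {w : W m | (cs m).length w ≤ 2 + maxw₀ m (d m w)} ≤ 8) ∧
    Tendsto (fun m : ℕ =>
        (Nat.card {w : W m | (cs m).length w ≤ 2 + maxw₀ m (d m w)} : ℝ)
          / Fintype.card (W m))
      atTop (nhds 0) := by
  have hdesc : ∀ m w, d m w = if (cs m).length w = m + 2 then 2 else if w = 1 then 0 else 1 :=
    fun m w => (hd m w).trans ((cs m).card_isLeftDescent w)
  have hproper : ∀ m, {w : W m | (cs m).length w ≤ 2 + maxw₀ m (d m w)} ⊆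
      {w | (cs m).length w ≤ 3 ∨ (cs m).length w = m + 2} := by
    intro m w hw
    simp only [Set.mem_ofPred_eq, hdesc, hmaxw₀] at hw ⊢
    split_ifs at hw <;> simp_all
  have hcard : ∀ m, Nat.card {w : W m | (cs m).length w ≤ 2 + maxw₀ m (d m w)} ≤ 8 := fun m =>
    (Nat.card_mono (Set.toFinite _) (hproper m)).trans (cs m).card_setOf_length_le_three_or_eq_le
  refine ⟨hdesc, hcard, squeeze_zero (fun m => by positivity) (fun m => ?_)
    ((tendsto_const_nhds (x := (8 : ℝ))).div_atTop
      (tendsto_atTop_add_const_right _ 2 tendsto_natCast_atTop_atTop))⟩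
  have horder : ((m : ℝ) + 2) ≤ Fintype.card (W m) := by
    exact_mod_cast (cs m).orderOf_simple_zero_mul_simple_one ▸ orderOf_le_card_univ
  exact div_le_div₀ (by norm_num) (by exact_mod_cast hcard m) (by positivity) horder
end

section
/- Consider the insertion process generating a uniformly random signed permutation: π_0 is empty, and π_t is obtained from π_{t-1} ∈ S_{t-1}^B by inserting the value t or -t (each index choice among the 2t signed positions with probability 1/(2t)), with the mirror value placed symmetrically. Then the conditional distribution of inv_D(π_{t+1}) − inv_D(π_t) given π_t assigns probability 1/(t+1) to the increment t and probability 1/(2(t+1)) to each increment a ∈ {0,...,2t} \ {t}; in particular this distribution is symmetric about t, i.e., Pr[increment = a] = Pr[increment = 2t − a] for all a ∈ {0,...,2t}. -/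
open Finset

/-- A signed permutation of `{±1, …, ±n}` is modelled as a pair `(σ, ε)`; its value at
positive position `i + 1` is `±(σ i + 1)`. -/
def signedVal {n : ℕ} (p : Equiv.Perm (Fin n) × (Fin n → Bool)) (i : Fin n) : ℤ :=
  if p.2 i then -((p.1 i : ℤ) + 1) else (p.1 i : ℤ) + 1

/-- `inv w = #{1 ≤ i < j ≤ n : w i > w j}`. -/
def sbInv {n : ℕ} (p : Equiv.Perm (Fin n) × (Fin n → Bool)) : ℕ :=
  ((univ : Finset (Fin n × Fin n)).filter fun q =>
    q.1 < q.2 ∧ signedVal p q.2 < signedVal p q.1).card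

/-- `nsp w = #{1 ≤ i < j ≤ n : w i + w j < 0}`. -/
def sbNsp {n : ℕ} (p : Equiv.Perm (Fin n) × (Fin n → Bool)) : ℕ :=
  ((univ : Finset (Fin n × Fin n)).filter fun q =>
    q.1 < q.2 ∧ signedVal p q.1 + signedVal p q.2 < 0).card

/-- `inv_D = inv + nsp`. -/
def sbInvD {n : ℕ} (p : Equiv.Perm (Fin n) × (Fin n → Bool)) : ℕ := sbInv p + sbNsp p

lemma card_pair_split {n : ℕ} (k : Fin (n+1)) (P : Fin (n+1) × Fin (n+1) → Prop) [DecidablePred P] :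
    ((univ : Finset (Fin (n+1) × Fin (n+1))).filter P).card =
      (if P (k,k) then 1 else 0)
      + ((∑ j : Fin n, if P (k, k.succAbove j) then 1 else 0)
      + ((∑ i : Fin n, if P (k.succAbove i, k) then 1 else 0)
      + ∑ i : Fin n, ∑ j : Fin n, if P (k.succAbove i, k.succAbove j) then 1 else 0)) := by
  rw [Finset.card_filter, Fintype.sum_prod_type,
      Fin.sum_univ_succAbove (fun i => ∑ j, if P (i, j) then 1 else 0) k,
      Fin.sum_univ_succAbove (fun j => if P (k, j) then 1 else 0) k]
  have h : ∀ i : Fin n, (∑ j, if P (k.succAbove i, j) then 1 else 0)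
      = (if P (k.succAbove i, k) then 1 else 0)
        + ∑ j : Fin n, if P (k.succAbove i, k.succAbove j) then 1 else 0 :=
    fun i => Fin.sum_univ_succAbove _ k
  rw [Finset.sum_congr rfl fun i _ => h i, Finset.sum_add_distrib]
  ring

lemma succAbove_eq_ite {n : ℕ} (k : Fin (n+1)) (i : Fin n) :
    k.succAbove i = if (i : ℕ) < (k : ℕ) then i.castSucc else i.succ := by
  simp [Fin.succAbove, Fin.lt_def]

lemma count_lt {n : ℕ} (k : Fin (n+1)) :
    (∑ i : Fin n, if (i:ℕ) < (k:ℕ) then 1 else 0) = (k:ℕ) := by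
  rw [Fin.sum_univ_eq_sum_range (fun i => if i < (k:ℕ) then 1 else 0) n,
      ← Finset.card_filter]
  have : (range n).filter (· < (k:ℕ)) = range (k:ℕ) := by
    ext x; simp; omega
  rw [this, card_range]

lemma count_ge {n : ℕ} (k : Fin (n+1)) :
    (∑ i : Fin n, if (k:ℕ) ≤ (i:ℕ) then 1 else 0) = n - (k:ℕ) := by
  rw [Fin.sum_univ_eq_sum_range (fun i => if (k:ℕ) ≤ i then 1 else 0) n,
      ← Finset.card_filter]
  have : (range n).filter ((k:ℕ) ≤ ·) = (range n).filter (¬ · < (k:ℕ)) := by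
    ext x; simp
  rw [this, Finset.filter_not, card_sdiff_of_subset (filter_subset _ _)]
  have : (range n).filter (· < (k:ℕ)) = range (k:ℕ) := by
    ext x; simp; omega
  rw [this, card_range, card_range]

lemma signedVal_bound {n : ℕ} (p : Equiv.Perm (Fin n) × (Fin n → Bool)) (i : Fin n) :
    -((n:ℤ)+1) < signedVal p i ∧ signedVal p i < (n:ℤ)+1 := by
  have h : ((p.1 i : ℕ) : ℤ) < n := by exact_mod_cast (p.1 i).isLt
  have h0 : (0:ℤ) ≤ ((p.1 i : ℕ) : ℤ) := Int.natCast_nonneg _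
  unfold signedVal
  split <;> constructor <;> omega


lemma key (t : ℕ)
    (ins : Equiv.Perm (Fin t) × (Fin t → Bool) → Fin (t + 1) × Bool →
      Equiv.Perm (Fin (t + 1)) × (Fin (t + 1) → Bool))
    (hins : ∀ (p : Equiv.Perm (Fin t) × (Fin t → Bool)) (k : Fin (t + 1)) (e : Bool),
      (ins p (k, e)).1 k = Fin.last t ∧ (ins p (k, e)).2 k = e ∧
      ∀ i : Fin t,
        (ins p (k, e)).1 (if (i : ℕ) < (k : ℕ) then i.castSucc else i.succ)
            = (p.1 i).castSucc ∧
        (ins p (k, e)).2 (if (i : ℕ) < (k : ℕ) then i.castSucc else i.succ) = p.2 i)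
    (p : Equiv.Perm (Fin t) × (Fin t → Bool)) (k : Fin (t+1)) (e : Bool) :
    sbInvD (ins p (k, e)) = sbInvD p + (if e then t + (k:ℕ) else t - (k:ℕ)) := by
  obtain ⟨hk1, hk2, hsa⟩ := hins p k e
  set q := ins p (k, e) with hq
  have hw : ∀ i : Fin t, signedVal q (k.succAbove i) = signedVal p i := by
    intro i
    have h := hsa i
    rw [← succAbove_eq_ite] at h
    unfold signedVal
    rw [h.1, h.2]
    simp
  have hwkT : e = true → signedVal q k = -((t:ℤ)+1) := by
    intro he; unfold signedVal; rw [hk1, hk2, he]; simp [Fin.val_last]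
  have hwkF : e = false → signedVal q k = (t:ℤ)+1 := by
    intro he; unfold signedVal; rw [hk1, hk2, he]; simp [Fin.val_last]
  have hb := signedVal_bound p
  have hlt : ∀ i : Fin t, (k.succAbove i < k ↔ (i:ℕ) < (k:ℕ)) := by
    intro i
    rw [Fin.succAbove_lt_iff_castSucc_lt, Fin.lt_def]
    simp
  have hgt : ∀ i : Fin t, (k < k.succAbove i ↔ (k:ℕ) ≤ (i:ℕ)) := by
    intro i
    rw [Fin.lt_succAbove_iff_le_castSucc, Fin.le_def]
    simp
  have hk : (k:ℕ) ≤ t := Nat.lt_succ_iff.1 k.isLt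
  have hInv : sbInv q = sbInv p + (if e then (k:ℕ) else t - (k:ℕ)) := by
    rw [sbInv, card_pair_split k]
    have e1 : (if (k < k ∧ signedVal q k < signedVal q k) then 1 else 0) = 0 := by
      simp
    have e2 : (∑ j : Fin t, if (k < k.succAbove j ∧ signedVal q (k.succAbove j) < signedVal q k)
          then 1 else 0) = if e then 0 else t - (k:ℕ) := by
      cases e
      · rw [if_neg (by simp)]
        have h : (∑ j : Fin t, if (k < k.succAbove j ∧
              signedVal q (k.succAbove j) < signedVal q k) then 1 else 0)
            = ∑ j : Fin t, if (k:ℕ) ≤ (j:ℕ) then (1:ℕ) else 0 := by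
          refine Finset.sum_congr rfl fun j _ => ?_
          refine if_congr ?_ rfl rfl
          rw [hw j, hwkF rfl, hgt j]
          exact ⟨fun h => h.1, fun h => ⟨h, (hb j).2⟩⟩
        rw [h, count_ge k]
      · rw [if_pos rfl]
        refine Finset.sum_eq_zero fun j _ => ?_
        refine if_neg fun hC => ?_
        have h2 := hC.2
        rw [hw j, hwkT rfl] at h2
        linarith [(hb j).1]
    have e3 : (∑ i : Fin t, if (k.succAbove i < k ∧ signedVal q k < signedVal q (k.succAbove i))
          then 1 else 0) = if e then (k:ℕ) else 0 := by
      cases e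
      · rw [if_neg (by simp)]
        refine Finset.sum_eq_zero fun i _ => ?_
        refine if_neg fun hC => ?_
        have h2 := hC.2
        rw [hw i, hwkF rfl] at h2
        linarith [(hb i).2]
      · rw [if_pos rfl]
        have h : (∑ i : Fin t, if (k.succAbove i < k ∧
              signedVal q k < signedVal q (k.succAbove i)) then 1 else 0)
            = ∑ i : Fin t, if (i:ℕ) < (k:ℕ) then (1:ℕ) else 0 := by
          refine Finset.sum_congr rfl fun i _ => ?_
          refine if_congr ?_ rfl rfl
          rw [hw i, hwkT rfl, hlt i]
          exact ⟨fun h => h.1, fun h => ⟨h, (hb i).1⟩⟩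
        rw [h, count_lt k]
    have e4 : (∑ i : Fin t, ∑ j : Fin t,
          if (k.succAbove i < k.succAbove j ∧
              signedVal q (k.succAbove j) < signedVal q (k.succAbove i)) then 1 else 0)
        = sbInv p := by
      rw [sbInv, Finset.card_filter, Fintype.sum_prod_type]
      exact Finset.sum_congr rfl fun i _ => Finset.sum_congr rfl fun j _ => by
        simp only [hw, Fin.succAbove_lt_succAbove_iff]
    rw [e1, e2, e3, e4]
    cases e <;> simp <;> omega
  have hNsp : sbNsp q = sbNsp p + (if e then t else 0) := by
    rw [sbNsp, card_pair_split k]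
    have e1 : (if (k < k ∧ signedVal q k + signedVal q k < 0) then 1 else 0) = 0 := by
      simp
    have e2 : (∑ j : Fin t, if (k < k.succAbove j ∧ signedVal q k + signedVal q (k.succAbove j) < 0)
          then 1 else 0) = if e then t - (k:ℕ) else 0 := by
      cases e
      · rw [if_neg (by simp)]
        refine Finset.sum_eq_zero fun j _ => ?_
        refine if_neg fun hC => ?_
        have h2 := hC.2
        rw [hw j, hwkF rfl] at h2
        linarith [(hb j).1]
      · rw [if_pos rfl]
        have h : (∑ j : Fin t, if (k < k.succAbove j ∧
              signedVal q k + signedVal q (k.succAbove j) < 0) then 1 else 0)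
            = ∑ j : Fin t, if (k:ℕ) ≤ (j:ℕ) then (1:ℕ) else 0 := by
          refine Finset.sum_congr rfl fun j _ => ?_
          refine if_congr ?_ rfl rfl
          rw [hw j, hwkT rfl, hgt j]
          exact ⟨fun h => h.1, fun h => ⟨h, by linarith [(hb j).2]⟩⟩
        rw [h, count_ge k]
    have e3 : (∑ i : Fin t, if (k.succAbove i < k ∧ signedVal q (k.succAbove i) + signedVal q k < 0)
          then 1 else 0) = if e then (k:ℕ) else 0 := by
      cases e
      · rw [if_neg (by simp)]
        refine Finset.sum_eq_zero fun i _ => ?_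
        refine if_neg fun hC => ?_
        have h2 := hC.2
        rw [hw i, hwkF rfl] at h2
        linarith [(hb i).1]
      · rw [if_pos rfl]
        have h : (∑ i : Fin t, if (k.succAbove i < k ∧
              signedVal q (k.succAbove i) + signedVal q k < 0) then 1 else 0)
            = ∑ i : Fin t, if (i:ℕ) < (k:ℕ) then (1:ℕ) else 0 := by
          refine Finset.sum_congr rfl fun i _ => ?_
          refine if_congr ?_ rfl rfl
          rw [hw i, hwkT rfl, hlt i]
          exact ⟨fun h => h.1, fun h => ⟨h, by linarith [(hb i).2]⟩⟩
        rw [h, count_lt k]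
    have e4 : (∑ i : Fin t, ∑ j : Fin t,
          if (k.succAbove i < k.succAbove j ∧
              signedVal q (k.succAbove i) + signedVal q (k.succAbove j) < 0) then 1 else 0)
        = sbNsp p := by
      rw [sbNsp, Finset.card_filter, Fintype.sum_prod_type]
      exact Finset.sum_congr rfl fun i _ => Finset.sum_congr rfl fun j _ => by
        simp only [hw, Fin.succAbove_lt_succAbove_iff]
    rw [e1, e2, e3, e4]
    cases e <;> simp <;> omega
  rw [sbInvD, sbInvD, hInv, hNsp]
  cases e <;> simp <;> omega


/-- One step of the insertion process generating a uniformly random signed permutation: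
`ins p (k, e)` inserts the new largest value, with sign `e`, at positive position `k`
(the mirror value is placed symmetrically).  Over the `2(t+1)` uniformly random choices
`(k, e)`, the increment `inv_D (ins p (k, e)) - inv_D p` takes the value `t` with
probability `1/(t+1)` (i.e. for exactly `2` choices) and each other value
`a ∈ {0, …, 2t} \ {t}` with probability `1/(2(t+1))` (exactly `1` choice); in
particular the increment distribution is symmetric about `t`. -/
theorem stmt_19 (t : ℕ)
    (ins : Equiv.Perm (Fin t) × (Fin t → Bool) → Fin (t + 1) × Bool →
      Equiv.Perm (Fin (t + 1)) × (Fin (t + 1) → Bool))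
    (hins : ∀ (p : Equiv.Perm (Fin t) × (Fin t → Bool)) (k : Fin (t + 1)) (e : Bool),
      (ins p (k, e)).1 k = Fin.last t ∧ (ins p (k, e)).2 k = e ∧
      ∀ i : Fin t,
        (ins p (k, e)).1 (if (i : ℕ) < (k : ℕ) then i.castSucc else i.succ)
            = (p.1 i).castSucc ∧
        (ins p (k, e)).2 (if (i : ℕ) < (k : ℕ) then i.castSucc else i.succ) = p.2 i) :
    (∀ (p : Equiv.Perm (Fin t) × (Fin t → Bool)) (a : ℕ), a ≤ 2 * t →
      ((univ : Finset (Fin (t + 1) × Bool)).filter fun ke =>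
        sbInvD (ins p ke) = sbInvD p + a).card = if a = t then 2 else 1) ∧
    (∀ (p : Equiv.Perm (Fin t) × (Fin t → Bool)) (a : ℕ), a ≤ 2 * t →
      ((univ : Finset (Fin (t + 1) × Bool)).filter fun ke =>
        sbInvD (ins p ke) = sbInvD p + a).card =
      ((univ : Finset (Fin (t + 1) × Bool)).filter fun ke =>
        sbInvD (ins p ke) = sbInvD p + (2 * t - a)).card) := by
  have main : ∀ (p : Equiv.Perm (Fin t) × (Fin t → Bool)) (a : ℕ), a ≤ 2 * t →
      ((univ : Finset (Fin (t + 1) × Bool)).filter fun ke =>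
        sbInvD (ins p ke) = sbInvD p + a).card = if a = t then 2 else 1 := by
    intro p a ha
    have hcond : ∀ ke : Fin (t+1) × Bool,
        (sbInvD (ins p ke) = sbInvD p + a)
          ↔ ((if ke.2 then t + (ke.1:ℕ) else t - (ke.1:ℕ)) = a) := by
      rintro ⟨k, e⟩
      rw [key t ins hins p k e]; exact Nat.add_left_cancel_iff
    rw [Finset.filter_congr fun ke _ => hcond ke, Finset.card_filter,
        Fintype.sum_prod_type]
    have hsum : ∀ k : Fin (t+1),
        (∑ e : Bool, if (if e then t + (k:ℕ) else t - (k:ℕ)) = a then (1:ℕ) else 0)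
          = (if t + (k:ℕ) = a then (1:ℕ) else 0) + (if t - (k:ℕ) = a then (1:ℕ) else 0) := by
      intro k
      rw [Fintype.sum_bool]
      simp
    rw [Finset.sum_congr rfl fun k _ => hsum k, Finset.sum_add_distrib]
    have h1 : (∑ k : Fin (t+1), if t + (k:ℕ) = a then (1:ℕ) else 0)
        = if t ≤ a then 1 else 0 := by
      rw [Fin.sum_univ_eq_sum_range (fun k => if t + k = a then 1 else 0) (t+1),
          ← Finset.card_filter]
      split
      · rw [show (range (t+1)).filter (fun k => t + k = a) = {a - t} by
          ext x; simp; omega]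
        simp
      · rw [show (range (t+1)).filter (fun k => t + k = a) = ∅ by
          ext x; simp; omega]
        simp
    have h2 : (∑ k : Fin (t+1), if t - (k:ℕ) = a then (1:ℕ) else 0)
        = if a ≤ t then 1 else 0 := by
      rw [Fin.sum_univ_eq_sum_range (fun k => if t - k = a then 1 else 0) (t+1),
          ← Finset.card_filter]
      split
      · rw [show (range (t+1)).filter (fun k => t - k = a) = {t - a} by
          ext x; simp; omega]
        simp
      · rw [show (range (t+1)).filter (fun k => t - k = a) = ∅ by
          ext x; simp; omega]
        simp
    rw [h1, h2]
    split_ifs <;> omega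
  refine ⟨main, fun p a ha => ?_⟩
  rw [main p a ha, main p (2 * t - a) (by omega)]
  split_ifs <;> omega
end
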